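/- Let η_k and η_{k+1} be independent Gamma random variables with parameters k/2 and (k+1)/2 respectively, and set R_k = η_k/η_{k+1}. Then for every k ≥ 1 and every ρ ∈ [0,1], P(R_k < 1 - ρ) ≤ √2 · (1 - ρ²/(2+ρ)²)^{k/2}. -/

import Mathlib

open MeasureTheory ProbabilityTheory Real Set

/-!
Chernoff bound. For `s ≥ 0`, the event `η < (1 - ρ) η'` (which is the event `R_k < 1 - ρ`,
as `η' > 0` almost surely) forces `exp (s ((1 - ρ) η' - η)) ≥ 1`, so by independence its
probability is at most the product of the Gamma moment generating functions,
`(1 + s)^(-k/2) (1 - s (1 - ρ))^(-(k+1)/2)`.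
At `s = ρ/2` the extra half power is at most `√2`, and
`(1 + ρ/2) (1 - ρ/2 (1 - ρ)) (1 - ρ²/(2+ρ)²) = (2 + ρ + ρ³) / (2 + ρ) ≥ 1`.
-/

@[fun_prop]
lemma measurable_gammaPDF (a r : ℝ) : Measurable (gammaPDF a r) :=
  (measurable_gammaPDFReal a r).ennreal_ofReal

lemma lintegral_exp_mul_gammaMeasure {a r t : ℝ} (ha : 0 < a) (hr : 0 ≤ r) (ht : t < r) :
    ∫⁻ x, ENNReal.ofReal (exp (t * x)) ∂gammaMeasure a r =
      ENNReal.ofReal ((r / (r - t)) ^ a) := by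
  have hrt : 0 < r - t := sub_pos.2 ht
  have htilt : ∀ x, gammaPDF a r x * ENNReal.ofReal (exp (t * x)) =
      ENNReal.ofReal ((r / (r - t)) ^ a) * gammaPDF a (r - t) x := by
    intro x
    rcases lt_or_ge x 0 with hx | hx
    · simp [gammaPDF_of_neg hx]
    · rw [gammaPDF_of_nonneg hx, gammaPDF_of_nonneg hx, ← ENNReal.ofReal_mul (by positivity),
        ← ENNReal.ofReal_mul (by positivity), div_rpow hr hrt.le, mul_assoc, ← exp_add]
      congr 1
      field_simp
      ring_nf
  rw [gammaMeasure, lintegral_withDensity_eq_lintegral_mul _ (by fun_prop) (by fun_prop)]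
  simp only [Pi.mul_apply, htilt]
  rw [lintegral_const_mul _ (by fun_prop), lintegral_gammaPDF_eq_one ha hrt, mul_one]

lemma ae_pos_gammaMeasure (a r : ℝ) : ∀ᵐ x ∂gammaMeasure a r, 0 < x := by
  rw [gammaMeasure, ae_withDensity_iff (by fun_prop)]
  filter_upwards [Measure.ae_ne volume 0] with x hx0 hpdf
  contrapose! hpdf
  exact gammaPDF_of_neg (lt_of_le_of_ne hpdf hx0)

lemma measure_div_lt_le_lintegral_exp_mul {Ω : Type*} [MeasurableSpace Ω] {μ : Measure Ω}
    {X Y : Ω → ℝ} (hX : Measurable X) (hY : Measurable Y) (hXY : IndepFun X Y μ)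
    (hY_pos : ∀ᵐ ω ∂μ, 0 < Y ω) {s : ℝ} (hs : 0 ≤ s) (c : ℝ) :
    μ {ω | X ω / Y ω < c} ≤
      (∫⁻ x, ENNReal.ofReal (exp (-s * x)) ∂μ.map X) *
        ∫⁻ y, ENNReal.ofReal (exp (s * c * y)) ∂μ.map Y := by
  set f : ℝ → ENNReal := fun x ↦ ENNReal.ofReal (exp (-s * x))
  set g : ℝ → ENNReal := fun y ↦ ENNReal.ofReal (exp (s * c * y))
  have hf : Measurable f := by fun_prop
  have hg : Measurable g := by fun_prop
  have hsub : {ω | X ω / Y ω < c} ≤ᵐ[μ] {ω | 1 ≤ f (X ω) * g (Y ω)} := by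
    filter_upwards [hY_pos] with ω hYω hlt
    have hXc : X ω < c * Y ω := (div_lt_iff₀ hYω).1 hlt
    change 1 ≤ ENNReal.ofReal (exp (-s * X ω)) * ENNReal.ofReal (exp (s * c * Y ω))
    rw [← ENNReal.ofReal_mul (exp_nonneg _), ← exp_add, ← ENNReal.ofReal_one]
    exact ENNReal.ofReal_le_ofReal (one_le_exp (by nlinarith))
  calc μ {ω | X ω / Y ω < c} ≤ μ {ω | 1 ≤ f (X ω) * g (Y ω)} := measure_mono_ae hsub
    _ ≤ ∫⁻ ω, f (X ω) * g (Y ω) ∂μ := by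
      simpa using mul_meas_ge_le_lintegral₀ ((hf.comp hX).mul (hg.comp hY)).aemeasurable 1
    _ = _ := by
      rw [lintegral_map hf hX, lintegral_map hg hY]
      exact lintegral_mul_eq_lintegral_mul_lintegral_of_indepFun'' (hf.comp hX).aemeasurable
        (hg.comp hY).aemeasurable (hXY.comp hf hg)

lemma one_sub_half_mul_one_sub_pos (ρ : ℝ) : 0 < 1 - ρ / 2 * (1 - ρ) := by
  nlinarith [sq_nonneg (ρ - 1 / 2)]

lemma one_div_mul_le_one_sub_sq_div_sq {ρ : ℝ} (hρ : 0 ≤ ρ) :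
    1 / ((1 + ρ / 2) * (1 - ρ / 2 * (1 - ρ))) ≤ 1 - ρ ^ 2 / (2 + ρ) ^ 2 := by
  have := one_sub_half_mul_one_sub_pos ρ
  rw [div_le_iff₀ (by positivity), one_sub_div (by positivity), div_mul_eq_mul_div,
    le_div_iff₀ (by positivity)]
  nlinarith [pow_nonneg hρ 3, pow_nonneg hρ 4]

lemma one_div_rpow_mul_one_div_rpow_add_half_le {ρ a : ℝ} (hρ : 0 ≤ ρ) (ha : 0 ≤ a) :
    (1 / (1 + ρ / 2)) ^ a * (1 / (1 - ρ / 2 * (1 - ρ))) ^ (a + 1 / 2) ≤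
      √2 * (1 - ρ ^ 2 / (2 + ρ) ^ 2) ^ a := by
  have hv := one_sub_half_mul_one_sub_pos ρ
  have hv_le : 1 / (1 - ρ / 2 * (1 - ρ)) ≤ 2 := by
    rw [div_le_iff₀ hv]; nlinarith [sq_nonneg (ρ - 1 / 2)]
  have huv := one_div_mul_le_one_sub_sq_div_sq hρ
  calc (1 / (1 + ρ / 2)) ^ a * (1 / (1 - ρ / 2 * (1 - ρ))) ^ (a + 1 / 2)
      = (1 / ((1 + ρ / 2) * (1 - ρ / 2 * (1 - ρ)))) ^ a *
          (1 / (1 - ρ / 2 * (1 - ρ))) ^ (1 / 2 : ℝ) := by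
        rw [rpow_add (by positivity), ← mul_assoc, ← mul_rpow (by positivity) (by positivity),
          one_div_mul_one_div]
    _ ≤ (1 - ρ ^ 2 / (2 + ρ) ^ 2) ^ a * √2 := by
        rw [sqrt_eq_rpow]
        exact mul_le_mul (rpow_le_rpow (by positivity) huv ha)
          (rpow_le_rpow (by positivity) hv_le (by norm_num)) (by positivity)
          (rpow_nonneg ((by positivity : (0 : ℝ) ≤ _).trans huv) _)
    _ = √2 * (1 - ρ ^ 2 / (2 + ρ) ^ 2) ^ a := mul_comm _ _

theorem ratio_lower_deviation_general {Ω : Type*} [MeasurableSpace Ω] (μ : Measure Ω)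
    (k : ℕ) (hk : 1 ≤ k) (ρ : ℝ) (hρ : ρ ∈ Set.Icc (0 : ℝ) 1)
    (η η' : Ω → ℝ) (hηm : Measurable η) (hη'm : Measurable η')
    (hηlaw : μ.map η = gammaMeasure ((k : ℝ) / 2) 1)
    (hη'law : μ.map η' = gammaMeasure (((k : ℝ) + 1) / 2) 1)
    (hindep : IndepFun η η' μ) :
    μ {ω | η ω / η' ω < 1 - ρ} ≤
      ENNReal.ofReal (Real.sqrt 2 * (1 - ρ ^ 2 / (2 + ρ) ^ 2) ^ ((k : ℝ) / 2)) := by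
  obtain ⟨hρ0, -⟩ := hρ
  have hk0 : (0 : ℝ) < k / 2 := half_pos (Nat.cast_pos.2 hk)
  have hη'_pos : ∀ᵐ ω ∂μ, 0 < η' ω :=
    ae_of_ae_map hη'm.aemeasurable (hη'law ▸ ae_pos_gammaMeasure _ _)
  calc μ {ω | η ω / η' ω < 1 - ρ}
      ≤ (∫⁻ x, ENNReal.ofReal (exp (-(ρ / 2) * x)) ∂μ.map η) *
          ∫⁻ y, ENNReal.ofReal (exp (ρ / 2 * (1 - ρ) * y)) ∂μ.map η' :=
        measure_div_lt_le_lintegral_exp_mul hηm hη'm hindep hη'_pos (by linarith) _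
    _ = ENNReal.ofReal ((1 / (1 + ρ / 2)) ^ ((k : ℝ) / 2) *
          (1 / (1 - ρ / 2 * (1 - ρ))) ^ ((k : ℝ) / 2 + 1 / 2)) := by
        rw [hηlaw, hη'law, lintegral_exp_mul_gammaMeasure hk0 zero_le_one (by linarith),
          lintegral_exp_mul_gammaMeasure (by positivity) zero_le_one
            (sub_pos.1 (one_sub_half_mul_one_sub_pos ρ)),
          sub_neg_eq_add, ← ENNReal.ofReal_mul (rpow_nonneg (by positivity) _), add_div]
    _ ≤ _ := ENNReal.ofReal_le_ofReal (one_div_rpow_mul_one_div_rpow_add_half_le hρ0 hk0.le)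

theorem ratio_lower_deviation {Ω : Type*} [MeasurableSpace Ω] (μ : Measure Ω)
    [IsProbabilityMeasure μ] (k : ℕ) (hk : 1 ≤ k) (ρ : ℝ) (hρ : ρ ∈ Set.Icc (0 : ℝ) 1)
    (η η' : Ω → ℝ) (hηm : Measurable η) (hη'm : Measurable η')
    (hηlaw : μ.map η = gammaMeasure ((k : ℝ) / 2) 1)
    (hη'law : μ.map η' = gammaMeasure (((k : ℝ) + 1) / 2) 1)
    (hindep : IndepFun η η' μ) :
    μ {ω | η ω / η' ω < 1 - ρ} ≤
      ENNReal.ofReal (Real.sqrt 2 * (1 - ρ ^ 2 / (2 + ρ) ^ 2) ^ ((k : ℝ) / 2)) :=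
  ratio_lower_deviation_general μ k hk ρ hρ η η' hηm hη'm hηlaw hη'law hindep
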